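/- Let n ≥ 1 and let A ⊆ ℕ be a crisp set, identified with the fuzzy set whose values lie in {0, 1}. Then the complement of A is n-c.e. in the classical sense (i.e., A is classically co-n-c.e.) if and only if the fuzzy complement 1 − A is fuzzy n-c.e. (i.e., A is fuzzy co-n-c.e.). -/

import Mathlib

open Filter

/-- The Σ-mind-change function of a sequence of rationals: starts at `1`,
flips to `-1` on a strict decrease while in increasing mode, and flips back
to `1` on a strict increase while in decreasing mode. -/
def mSigma (g : ℕ → ℚ) : ℕ → ℤ
  | 0 => 1
  | s + 1 =>
      if mSigma g s = 1 then (if g s ≤ g (s + 1) then 1 else -1)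
      else (if g (s + 1) ≤ g s then -1 else 1)

/-- A fuzzy set: a function `ℕ → ℝ` with values in `[0,1]`. -/
def IsFuzzySet (A : ℕ → ℝ) : Prop := ∀ x, 0 ≤ A x ∧ A x ≤ 1

/-- `f` is a Σ⁰₁-approximation of the fuzzy set `A`. -/
def SigmaApprox (f : ℕ → ℕ → ℚ) (A : ℕ → ℝ) : Prop :=
  Computable₂ f ∧ (∀ x s, 0 ≤ f x s ∧ f x s ≤ 1) ∧
    (∀ x s, f x s ≤ f x (s + 1)) ∧
    (∀ x, Tendsto (fun s => (f x s : ℝ)) atTop (nhds (A x)))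

/-- A fuzzy set is computably enumerable if it has a Σ⁰₁-approximation. -/
def FuzzyCE (A : ℕ → ℝ) : Prop := ∃ f : ℕ → ℕ → ℚ, SigmaApprox f A

/-- `f` is a Δ⁰₂-approximation of the fuzzy set `A`. -/
def DeltaApprox (f : ℕ → ℕ → ℚ) (A : ℕ → ℝ) : Prop :=
  Computable₂ f ∧ (∀ x s, 0 ≤ f x s ∧ f x s ≤ 1) ∧
    (∀ x, Tendsto (fun s => (f x s : ℝ)) atTop (nhds (A x)))

/-- A fuzzy set `A` is `n`-c.e. if it has a Δ⁰₂-approximation which starts at `0`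
and changes monotonicity at most `n - 1` times. -/
def FuzzyNCE (n : ℕ) (A : ℕ → ℝ) : Prop :=
  ∃ f : ℕ → ℕ → ℚ, DeltaApprox f A ∧ (∀ x, f x 0 = 0) ∧
    (∀ x, {s | mSigma (f x) (s + 1) ≠ mSigma (f x) s}.Finite ∧
      {s | mSigma (f x) (s + 1) ≠ mSigma (f x) s}.ncard ≤ n - 1)

/-- A crisp set `A ⊆ ℕ` is classically `n`-c.e.: it has a computable `{0,1}`-valued
approximation starting at `0`, converging to the characteristic function of `A`,
with at most `n` changes. -/
def ClassicalNCE (n : ℕ) (A : Set ℕ) : Prop :=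
  ∃ f : ℕ → ℕ → Bool, Computable₂ f ∧ (∀ x, f x 0 = false) ∧
    (∀ x, ∀ᶠ s in atTop, (f x s = true ↔ x ∈ A)) ∧
    (∀ x, {s | f x s ≠ f x (s + 1)}.Finite ∧ {s | f x s ≠ f x (s + 1)}.ncard ≤ n)

/-!
Forward: read the crisp approximation of `Aᶜ` as a `{0, 1}`-valued rational one. It changes
monotonicity exactly at the changes of the crisp approximation except the first one, which starts
from `0` and is therefore an increase, so at most `n - 1` mind changes occur.

Backward: threshold the fuzzy approximation at `1 / 2`. Whenever the thresholded value flips, the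
approximation moves strictly in the direction of the flip, so the Σ-mind-change function points in
that direction afterwards; two consecutive flips point in opposite directions, hence a mind change
lies between them and there are at most `(n - 1) + 1` flips. Thresholding is computable because a
rational's `Primcodable` code is the rank of its `(num, den)` code among all such codes, and the
`n`-th element of a primitive recursive infinite set of naturals is computable by unbounded search.
-/

open Encodable

def Nat.euclidStep (c : ℕ × ℕ) : ℕ × ℕ := if c.1 = 0 then c else (c.2 % c.1, c.1)

theorem Nat.euclidStep_iterate_snd (k a b : ℕ) (hak : a ≤ k) :
    (Nat.euclidStep^[k] (a, b)).2 = Nat.gcd a b := by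
  induction k generalizing a b with
  | zero => simp [Nat.le_zero.mp hak]
  | succ k ih =>
    rw [Function.iterate_succ_apply]
    rcases Nat.eq_zero_or_pos a with rfl | ha
    · simpa [Nat.euclidStep] using ih 0 b k.zero_le
    · simp only [Nat.euclidStep, ha.ne', if_false]
      rw [ih _ _ (by have := Nat.mod_lt b ha; omega), ← Nat.gcd_rec]

namespace Primrec

theorem nat_count {p : ℕ → Prop} [DecidablePred p] (hp : PrimrecPred p) :
    Primrec (Nat.count p) := by
  have hstep : Primrec₂ fun (s acc : ℕ) => acc + if p s then 1 else 0 :=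
    nat_add.comp₂ Primrec₂.right (ite (hp.comp fst) (const 1) (const 0))
  refine (nat_rec₁ 0 hstep).of_eq fun t => ?_
  induction t with
  | zero => simp
  | succ t ih => rw [Nat.count_succ, ← ih]

theorem nat_gcd : Primrec₂ Nat.gcd := by
  have hstep : Primrec Nat.euclidStep :=
    ite (Primrec.eq.comp fst (const 0)) Primrec.id (pair (nat_mod.comp snd fst) fst)
  exact (snd.comp (nat_iterate fst Primrec.id (hstep.comp snd).to₂)).of_eq
    fun c => Nat.euclidStep_iterate_snd c.1 c.1 c.2 le_rfl

end Primrec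

theorem Computable.nat_nth {p : ℕ → Prop} (hp : PrimrecPred p)
    (hinf : (Set.ofPred p).Infinite) : Computable (Nat.nth p) := by
  classical
  have hsearch : Computable₂ fun (n m : ℕ) => decide (n < Nat.count p (m + 1)) :=
    (Primrec.nat_lt.comp Primrec.fst ((Primrec.nat_count hp).comp
      (Primrec.succ.comp Primrec.snd))).decide.to_comp
  refine (Partrec.rfind hsearch.partrec₂).of_eq_tot fun n =>
    Nat.mem_rfind.mpr ⟨?_, fun hm => ?_⟩
  · simp [Nat.lt_nth_iff_count_lt hinf]
  · simpa [Nat.lt_nth_iff_count_lt hinf] using hm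

theorem Primrec.int_natAbs : Primrec Int.natAbs := by
  refine ((nat_div.comp succ (const 2)).comp Primrec.encode).of_eq fun z => ?_
  change (Equiv.intEquivNat z + 1) / 2 = z.natAbs
  cases z with
  | ofNat m => change (2 * m + 1) / 2 = m; omega
  | negSucc m => change (2 * m + 1 + 1) / 2 = m + 1; omega

theorem Primrec.int_toNat : Primrec Int.toNat := by
  refine ((ite (Primrec.eq.comp (nat_mod.comp Primrec.id (const 2)) (const 0))
    (nat_div.comp Primrec.id (const 2)) (const 0)).comp Primrec.encode).of_eq fun z => ?_
  change (if Equiv.intEquivNat z % 2 = 0 then Equiv.intEquivNat z / 2 else 0) = z.toNat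
  cases z with
  | ofNat m => change (if 2 * m % 2 = 0 then 2 * m / 2 else 0) = m; simp
  | negSucc m => change (if (2 * m + 1) % 2 = 0 then (2 * m + 1) / 2 else 0) = 0; simp

theorem Rat.mem_range_encode_iff (k : ℕ) :
    k ∈ Set.range (@encode ℚ Rat.instEncodable) ↔
      k.unpair.2 ≠ 0 ∧ (Denumerable.ofNat ℤ k.unpair.1).natAbs.Coprime k.unpair.2 := by
  constructor
  · rintro ⟨q, rfl⟩
    change (Nat.pair (Equiv.intEquivNat q.num) q.den).unpair.2 ≠ 0 ∧
      (Denumerable.ofNat ℤ (Nat.pair (Equiv.intEquivNat q.num) q.den).unpair.1).natAbs.Coprime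
        (Nat.pair (Equiv.intEquivNat q.num) q.den).unpair.2
    simp only [Nat.unpair_pair]
    exact ⟨q.den_nz, by simpa using q.reduced⟩
  · rintro ⟨hden, hcop⟩
    refine ⟨⟨Denumerable.ofNat ℤ k.unpair.1, k.unpair.2, hden, hcop⟩, ?_⟩
    change Nat.pair (encode (Denumerable.ofNat ℤ k.unpair.1)) k.unpair.2 = k
    rw [Denumerable.encode_ofNat, Nat.pair_unpair]

theorem Rat.primrecPred_mem_range_encode :
    PrimrecPred (· ∈ Set.range (@encode ℚ Rat.instEncodable)) := by
  have hnum : Primrec fun k : ℕ => (Denumerable.ofNat ℤ k.unpair.1).natAbs :=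
    Primrec.int_natAbs.comp ((Primrec.ofNat ℤ).comp (Primrec.fst.comp Primrec.unpair))
  have hden : Primrec fun k : ℕ => k.unpair.2 := Primrec.snd.comp Primrec.unpair
  refine PrimrecPred.of_eq ?_ fun k => (Rat.mem_range_encode_iff k).symm
  exact (Primrec.eq.comp hden (Primrec.const 0)).not.and
    (Primrec.eq.comp (Primrec.nat_gcd.comp hnum hden) (Primrec.const 1))

theorem Rat.computable_num_den : Computable fun q : ℚ => (q.num, q.den) := by
  have hinf : (Set.ofPred (· ∈ Set.range (@encode ℚ Rat.instEncodable))).Infinite :=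
    Set.infinite_range_of_injective encode_injective
  refine Computable.encode_iff.mp <|
    ((Computable.nat_nth Rat.primrecPred_mem_range_encode hinf).comp Computable.encode).of_eq
      fun q => ?_
  let := decidableRangeEncode ℚ
  -- the `Primcodable ℚ` code of `q` is the rank of its `Encodable ℚ` code in the range
  change Nat.nth _ (Nat.count _ (@encode ℚ Rat.instEncodable q)) = _
  exact Nat.nth_count ⟨q, rfl⟩

theorem Rat.half_lt_iff_den_lt (q : ℚ) : 1 / 2 < q ↔ q.den < 2 * q.num.toNat := by
  have hden : (0 : ℚ) < q.den := by exact_mod_cast q.pos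
  calc 1 / 2 < q ↔ 1 / 2 < (q.num : ℚ) / q.den := by rw [Rat.num_div_den]
    _ ↔ ((q.den : ℤ) : ℚ) < ((2 * q.num : ℤ) : ℚ) := by
      rw [div_lt_div_iff₀ two_pos hden]; push_cast; ring_nf
    _ ↔ q.den < 2 * q.num.toNat := by rw [Int.cast_lt]; omega

theorem Rat.computable_decide_half_lt : Computable fun q : ℚ => decide (1 / 2 < q) := by
  have h : Primrec fun c : ℤ × ℕ => decide (c.2 < 2 * c.1.toNat) :=
    (Primrec.nat_lt.comp Primrec.snd
      (Primrec.nat_mul.comp (Primrec.const 2) (Primrec.int_toNat.comp Primrec.fst))).decide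
  exact (h.to_comp.comp Rat.computable_num_den).of_eq fun q =>
    decide_eq_decide.mpr (Rat.half_lt_iff_den_lt q).symm

theorem mSigma_succ (g : ℕ → ℚ) (s : ℕ) :
    mSigma g (s + 1) =
      if mSigma g s = 1 then (if g s ≤ g (s + 1) then 1 else -1)
      else (if g (s + 1) ≤ g s then -1 else 1) := rfl

theorem mSigma_eq_one_or_eq_neg_one (g : ℕ → ℚ) (s : ℕ) :
    mSigma g s = 1 ∨ mSigma g s = -1 := by
  cases s with
  | zero => exact Or.inl rfl
  | succ s => rw [mSigma_succ]; split_ifs <;> simp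

section MindChange

variable {g : ℕ → ℚ} {s : ℕ}

theorem mSigma_succ_of_lt (h : g s < g (s + 1)) : mSigma g (s + 1) = 1 := by
  rw [mSigma_succ]; split_ifs <;> first | rfl | linarith

theorem mSigma_succ_of_gt (h : g (s + 1) < g s) : mSigma g (s + 1) = -1 := by
  rw [mSigma_succ]; split_ifs <;> first | rfl | linarith

theorem mSigma_succ_of_eq (h : g s = g (s + 1)) : mSigma g (s + 1) = mSigma g s := by
  rw [mSigma_succ]
  rcases mSigma_eq_one_or_eq_neg_one g s with hs | hs <;> simp [hs, h]

theorem mSigma_succ_of_decide_lt_ne {c : ℚ} (h : decide (c < g s) ≠ decide (c < g (s + 1))) :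
    mSigma g (s + 1) = if c < g (s + 1) then 1 else -1 := by
  by_cases hc : c < g (s + 1)
  · have : ¬c < g s := by simpa [hc] using h
    rw [if_pos hc, mSigma_succ_of_lt (by linarith)]
  · have : c < g s := by simpa [hc] using h
    rw [if_neg hc, mSigma_succ_of_gt (by linarith)]

end MindChange

theorem apply_eq_apply_zero_of_forall_lt {α : Type*} {u : ℕ → α} {t : ℕ}
    (h : ∀ s < t, u s = u (s + 1)) : u t = u 0 := by
  induction t with
  | zero => rfl
  | succ t ih => rw [← h t t.lt_succ_self, ih fun s hs => h s (hs.trans t.lt_succ_self)]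

section Indicator

variable {b : ℕ → Bool} {g : ℕ → ℚ} (hg : ∀ s, g s = if b s then 1 else 0)
include hg

theorem mSigma_changes_subset_of_ite :
    {s | mSigma g (s + 1) ≠ mSigma g s} ⊆ {s | b s ≠ b (s + 1)} :=
  fun s hs hb => hs (mSigma_succ_of_eq (by rw [hg, hg, hb]))

theorem mSigma_succ_of_first_change_of_ite (hb0 : b 0 = false) {t : ℕ}
    (hbefore : ∀ s < t, b s = b (s + 1)) (ht : b t ≠ b (t + 1)) :
    mSigma g (t + 1) = mSigma g t := by
  have hbt : b t = false := (apply_eq_apply_zero_of_forall_lt hbefore).trans hb0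
  have hbt' : b (t + 1) = true := by simpa [hbt] using ht.symm
  have hconst : ∀ s < t, g s = g (s + 1) := fun s hs => by rw [hg, hg, hbefore s hs]
  have hmt : mSigma g t = 1 :=
    apply_eq_apply_zero_of_forall_lt fun s hs => (mSigma_succ_of_eq (hconst s hs)).symm
  rw [hmt, mSigma_succ_of_lt (by rw [hg, hg, hbt, hbt']; norm_num)]

-- the first change of `b` is an increase from `0`, which the Σ-mind-change function ignores
theorem ncard_mSigma_changes_le_of_ite (hb0 : b 0 = false) (hfin : {s | b s ≠ b (s + 1)}.Finite) :
    {s | mSigma g (s + 1) ≠ mSigma g s}.Finite ∧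
      {s | mSigma g (s + 1) ≠ mSigma g s}.ncard ≤ {s | b s ≠ b (s + 1)}.ncard - 1 := by
  have hsub := mSigma_changes_subset_of_ite hg
  refine ⟨hfin.subset hsub, ?_⟩
  rcases Set.eq_empty_or_nonempty {s | b s ≠ b (s + 1)} with hempty | ⟨t₀, ht₀⟩
  · simp [Set.subset_empty_iff.mp (hempty ▸ hsub)]
  classical
  have hfirst : Nat.find ⟨t₀, ht₀⟩ ∉ {s | mSigma g (s + 1) ≠ mSigma g s} :=
    not_not.mpr (mSigma_succ_of_first_change_of_ite hg hb0
      (fun s hs => not_not.mp (Nat.find_min _ hs)) (Nat.find_spec ⟨t₀, ht₀⟩))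
  calc _ ≤ ({s | b s ≠ b (s + 1)} \ {Nat.find ⟨t₀, ht₀⟩}).ncard :=
        Set.ncard_le_ncard (fun s hs => ⟨hsub hs, fun h => hfirst (h ▸ hs)⟩) hfin.sdiff
    _ = _ := Set.ncard_sdiff_singleton_of_mem (Nat.find_spec ⟨t₀, ht₀⟩)

end Indicator

theorem Nat.finite_and_ncard_le_of_forall_count_le {p : ℕ → Prop} [DecidablePred p] {k : ℕ}
    (h : ∀ t, Nat.count p t ≤ k) : {s | p s}.Finite ∧ {s | p s}.ncard ≤ k := by
  have hfin : {s | p s}.Finite := by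
    by_contra hinf
    have := h (Nat.nth p (k + 1))
    rw [Nat.count_nth_of_infinite hinf] at this
    omega
  refine ⟨hfin, ?_⟩
  obtain ⟨N, hN⟩ := hfin.bddAbove
  calc {s | p s}.ncard = Nat.count p (N + 1) := by
        rw [Nat.count_eq_card_filter_range, Set.ncard_eq_toFinset_card _ hfin]
        congr 1
        ext s
        simpa [Nat.lt_succ_iff] using fun hs => hN hs
    _ ≤ k := h _

section Changes

variable {α β : Type*} {u : ℕ → α} {v : ℕ → β} {σ : β → α}

-- a change of `v` resets the defect `[u t ≠ σ (v t)]` to `0`, and forces a change of `u` when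
-- the defect already is `0`
theorem count_changes_add_le_count_changes_add_one [DecidableEq α] [DecidableEq β]
    (hσ : σ.Injective) (huv : ∀ s, v s ≠ v (s + 1) → u (s + 1) = σ (v (s + 1))) (t : ℕ) :
    Nat.count (fun s => v s ≠ v (s + 1)) t + (if u t = σ (v t) then 0 else 1) ≤
      Nat.count (fun s => u s ≠ u (s + 1)) t + 1 := by
  induction t with
  | zero => rw [Nat.count_zero, Nat.count_zero]; split <;> omega
  | succ t ih =>
    rw [Nat.count_succ, Nat.count_succ]
    by_cases hv : v t = v (t + 1)
    · rw [if_neg (not_not.mpr hv), ← hv]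
      by_cases hu : u t = u (t + 1)
      · rwa [if_neg (not_not.mpr hu), ← hu]
      · rw [if_pos hu]
        split_ifs at ih ⊢ <;> omega
    · rw [if_pos hv, if_pos (huv t hv)]
      by_cases hmatch : u t = σ (v t)
      · have hu : u t ≠ u (t + 1) := fun h => hv (hσ (hmatch ▸ huv t hv ▸ h))
        rw [if_pos hmatch] at ih
        rw [if_pos hu]
        omega
      · rw [if_neg hmatch] at ih
        split_ifs <;> omega

theorem ncard_changes_le_ncard_changes_add_one (hσ : σ.Injective)
    (huv : ∀ s, v s ≠ v (s + 1) → u (s + 1) = σ (v (s + 1)))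
    (hfin : {s | u s ≠ u (s + 1)}.Finite) :
    {s | v s ≠ v (s + 1)}.Finite ∧
      {s | v s ≠ v (s + 1)}.ncard ≤ {s | u s ≠ u (s + 1)}.ncard + 1 := by
  classical
  exact Nat.finite_and_ncard_le_of_forall_count_le fun t =>
    (Nat.le_add_right _ _).trans <| (count_changes_add_le_count_changes_add_one hσ huv t).trans <|
      Nat.add_le_add_right (Nat.count_le_setNCard t hfin) 1

end Changes

theorem ncard_decide_lt_changes_le (g : ℕ → ℚ) (c : ℚ)
    (hfin : {s | mSigma g (s + 1) ≠ mSigma g s}.Finite) :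
    {s | decide (c < g s) ≠ decide (c < g (s + 1))}.Finite ∧
      {s | decide (c < g s) ≠ decide (c < g (s + 1))}.ncard ≤
        {s | mSigma g (s + 1) ≠ mSigma g s}.ncard + 1 := by
  have hchanges : {s | mSigma g (s + 1) ≠ mSigma g s} = {s | mSigma g s ≠ mSigma g (s + 1)} :=
    Set.ext fun _ => ne_comm
  rw [hchanges] at hfin ⊢
  refine ncard_changes_le_ncard_changes_add_one (σ := fun b => if b then 1 else -1)
    (by decide) (fun s hs => ?_) hfin
  simpa using mSigma_succ_of_decide_lt_ne hs

theorem tendsto_ite_of_eventually_iff {b : ℕ → Bool} {P : Prop} [Decidable P]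
    (h : ∀ᶠ s in atTop, (b s = true ↔ P)) :
    Tendsto (fun s => ((if b s then 1 else 0 : ℚ) : ℝ)) atTop (nhds (if P then 1 else 0)) :=
  tendsto_const_nhds.congr' <| h.mono fun s hs => by by_cases hP : P <;> simp_all

theorem eventually_decide_half_lt_iff {u : ℕ → ℚ} {P : Prop} [Decidable P]
    (h : Tendsto (fun s => (u s : ℝ)) atTop (nhds (if P then 1 else 0))) :
    ∀ᶠ s in atTop, (decide (1 / 2 < u s) = true ↔ P) := by
  by_cases hP : P
  · rw [if_pos hP] at h
    filter_upwards [h.eventually (lt_mem_nhds (by norm_num : (1 / 2 : ℝ) < 1))] with s hs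
    simp only [hP, iff_true, decide_eq_true_eq]
    exact_mod_cast (by push_cast; exact hs : ((1 / 2 : ℚ) : ℝ) < u s)
  · rw [if_neg hP] at h
    filter_upwards [h.eventually (gt_mem_nhds (by norm_num : (0 : ℝ) < 1 / 2))] with s hs
    simp only [hP, iff_false, decide_eq_true_eq, not_lt]
    exact_mod_cast (by push_cast; exact hs.le : (u s : ℝ) ≤ ((1 / 2 : ℚ) : ℝ))

/-- A crisp set is classically co-`n`-c.e. (its complement is classically `n`-c.e.)
iff its fuzzy complement `1 - A` is fuzzy `n`-c.e. -/
theorem crisp_classical_co_nce_iff_fuzzy_co_nce (n : ℕ) (hn : 1 ≤ n) (A : Set ℕ) :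
    ClassicalNCE n Aᶜ ↔
      FuzzyNCE n (fun x => 1 - (A.indicator fun _ => (1 : ℝ)) x) := by
  classical
  have hlimit (x : ℕ) : 1 - A.indicator (fun _ => (1 : ℝ)) x = if x ∈ Aᶜ then 1 else 0 := by
    by_cases hx : x ∈ A <;> simp [hx]
  constructor
  · rintro ⟨f, hf, hf0, hconv, hchanges⟩
    refine ⟨fun x s => if f x s then 1 else 0,
      ⟨?_, fun x s => by dsimp only; split <;> norm_num, fun x => ?_⟩, fun x => by simp [hf0],
      fun x => ?_⟩
    · exact (Computable.cond hf (Computable.const 1) (Computable.const 0)).of_eq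
        fun p => Bool.cond_eq_ite _ _ _
    · beta_reduce
      rw [hlimit]
      exact tendsto_ite_of_eventually_iff (hconv x)
    · obtain ⟨hfin, hcard⟩ :=
        ncard_mSigma_changes_le_of_ite (fun _ => rfl) (hf0 x) (hchanges x).1
      exact ⟨hfin, hcard.trans (Nat.sub_le_sub_right (hchanges x).2 1)⟩
  · rintro ⟨g, ⟨hg, -, hconv⟩, hg0, hchanges⟩
    refine ⟨fun x s => decide (1 / 2 < g x s), Rat.computable_decide_half_lt.comp hg,
      fun x => by simp [hg0], fun x => eventually_decide_half_lt_iff (hlimit x ▸ hconv x),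
      fun x => ?_⟩
    obtain ⟨hfin, hcard⟩ := ncard_decide_lt_changes_le (g x) (1 / 2) (hchanges x).1
    exact ⟨hfin, hcard.trans (by have := (hchanges x).2; omega)⟩
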